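/- Let (Y,d) be a CAT(1) space and let P, Q, R ∈ Y with d(P,Q) < π/2 and d(P,R) < π/2. Let M = ½Q + ½R be the midpoint of the geodesic from Q to R. Then (1/8)·cos(d(M,P))·d(Q,R)² ≤ ½·(d(R,P)² + d(Q,P)²) − d(M,P)². -/

import Mathlib

open scoped RealInnerProductSpace

noncomputable def sphereDist (x y : EuclideanSpace ℝ (Fin 3)) : ℝ :=
  Real.arccos ⟪x, y⟫

open Classical in
noncomputable def sphereInterp (x y : EuclideanSpace ℝ (Fin 3)) (t : ℝ) :
    EuclideanSpace ℝ (Fin 3) :=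
  if Real.sin (sphereDist x y) = 0 then x
  else (Real.sin ((1 - t) * sphereDist x y) / Real.sin (sphereDist x y)) • x
     + (Real.sin (t * sphereDist x y) / Real.sin (sphereDist x y)) • y

/-- A CAT(1) structure on a complete metric space `Y`: every pair of points at
distance `< π` is joined by a constant-speed minimizing geodesic
`t ↦ interp P Q t` (the point `(1-t)P + tQ`, at distance `t·d(P,Q)` from `P`),
and every geodesic triangle of perimeter `< 2π` satisfies the CAT(1)
comparison inequality with respect to any comparison triangle on the unit
sphere `S² ⊂ ℝ³` (with the angular metric). -/
structure CAT1Space (Y : Type*) [MetricSpace Y] [CompleteSpace Y] where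
  interp : Y → Y → ℝ → Y
  interp_zero : ∀ P Q : Y, dist P Q < Real.pi → interp P Q 0 = P
  interp_one : ∀ P Q : Y, dist P Q < Real.pi → interp P Q 1 = Q
  interp_dist : ∀ P Q : Y, dist P Q < Real.pi →
    ∀ s t : ℝ, s ∈ Set.Icc (0:ℝ) 1 → t ∈ Set.Icc (0:ℝ) 1 →
      dist (interp P Q s) (interp P Q t) = |s - t| * dist P Q
  comparison : ∀ P Q R : Y,
    dist P Q + dist Q R + dist R P < 2 * Real.pi →
    ∀ p q r : EuclideanSpace ℝ (Fin 3), ‖p‖ = 1 → ‖q‖ = 1 → ‖r‖ = 1 →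
      sphereDist p q = dist P Q → sphereDist q r = dist Q R →
      sphereDist r p = dist R P →
      ∀ s t : ℝ, s ∈ Set.Icc (0:ℝ) 1 → t ∈ Set.Icc (0:ℝ) 1 →
        dist (interp P Q t) (interp R Q s) ≤
          sphereDist (sphereInterp p q t) (sphereInterp r q s)

/-!
Put a comparison triangle `q̄ r̄ p̄` for `Q R P` on the unit sphere and write `a = d(R,P)`,
`b = d(Q,P)`, `L = d(Q,R)`. The spherical midpoint of `q̄ r̄` is `(q̄ + r̄) / (2 cos (L/2))`, so the
CAT(1) inequality gives `d(M,P) ≤ δ` with `cos δ · cos (L/2) = (cos a + cos b) / 2`. For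
`μ = arccos ((cos a + cos b) / 2)`, convexity of `u ↦ cos √u` gives `μ² ≤ (a² + b²) / 2`, while
`μ² - δ² ≥ 2 (cos δ - cos μ) = 2 cos δ (1 - cos (L/2)) ≥ (L² / 8) cos δ`. Finally
`x ↦ x² + (L² / 8) cos x` is monotone on `[0, ∞)` because `L² / 8 ≤ 2`, which transfers the bound
from `δ` to `d(M,P)`.
-/

open Real Set

lemma sin_div_le_sin_div {x y : ℝ} (hx : 0 < x) (hxy : x ≤ y) (hy : y ≤ π) :
    sin y / y ≤ sin x / x := by
  have := strictConcaveOn_sin_Icc.concaveOn.neg.secant_mono (a := 0) ⟨le_rfl, pi_pos.le⟩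
    ⟨hx.le, hxy.trans hy⟩ ⟨hx.le.trans hxy, hy⟩ hx.ne' (hx.trans_le hxy).ne' hxy
  simpa [neg_div] using this

lemma convexOn_cos_sqrt : ConvexOn ℝ (Icc 0 (π ^ 2)) (fun u => cos √u) := by
  have hderiv : ∀ u ∈ interior (Icc 0 (π ^ 2)),
      HasDerivAt (fun u => cos √u) (-(sin √u / √u) / 2) u := by
    intro u hu
    rw [interior_Icc] at hu
    convert (hasDerivAt_sqrt hu.1.ne').cos using 1
    field_simp
  refine MonotoneOn.convexOn_of_deriv (convex_Icc _ _)
    (continuous_cos.comp continuous_sqrt).continuousOn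
    (fun u hu => (hderiv u hu).differentiableAt.differentiableWithinAt) ?_
  intro u hu v hv huv
  rw [(hderiv u hu).deriv, (hderiv v hv).deriv]
  rw [interior_Icc] at hu hv
  have hvπ : √v ≤ π := by simpa [sqrt_sq pi_pos.le] using sqrt_le_sqrt hv.2.le
  have := sin_div_le_sin_div (sqrt_pos.2 hu.1) (sqrt_le_sqrt huv) hvπ
  linarith

lemma arccos_cos_add_cos_div_two_sq_le {a b : ℝ} (ha : a ∈ Icc 0 π) (hb : b ∈ Icc 0 π) :
    arccos ((cos a + cos b) / 2) ^ 2 ≤ (a ^ 2 + b ^ 2) / 2 := by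
  have hsq : ∀ x ∈ Icc 0 π, x ^ 2 ∈ Icc 0 (π ^ 2) := fun x hx =>
    ⟨sq_nonneg x, pow_le_pow_left₀ hx.1 hx.2 2⟩
  have hconv := convexOn_cos_sqrt.2 (hsq a ha) (hsq b hb) (by norm_num : (0 : ℝ) ≤ 1 / 2)
    (by norm_num : (0 : ℝ) ≤ 1 / 2) (by norm_num)
  simp only [smul_eq_mul, sqrt_sq ha.1, sqrt_sq hb.1] at hconv
  set w := √(1 / 2 * a ^ 2 + 1 / 2 * b ^ 2)
  have hwπ : w ≤ π :=
    calc w ≤ √(π ^ 2) := sqrt_le_sqrt (by nlinarith [(hsq a ha).2, (hsq b hb).2])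
      _ = π := sqrt_sq pi_pos.le
  have hle : arccos ((cos a + cos b) / 2) ≤ w := by
    calc arccos ((cos a + cos b) / 2) ≤ arccos (cos w) := arccos_le_arccos (by linarith)
      _ = w := arccos_cos (sqrt_nonneg _) hwπ
  calc arccos ((cos a + cos b) / 2) ^ 2 ≤ w ^ 2 := pow_le_pow_left₀ (arccos_nonneg _) hle 2
    _ = (a ^ 2 + b ^ 2) / 2 := by rw [sq_sqrt (by positivity)]; ring

lemma two_mul_cos_sub_cos_le {x y : ℝ} (hx : 0 ≤ x) (hxy : x ≤ y) :
    2 * (cos x - cos y) ≤ y ^ 2 - x ^ 2 := by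
  have hA := abs_sin_le_abs (x := (x + y) / 2)
  have hB := abs_sin_le_abs (x := (x - y) / 2)
  rw [abs_of_nonneg (by linarith : 0 ≤ (x + y) / 2)] at hA
  rw [abs_of_nonpos (by linarith : (x - y) / 2 ≤ 0)] at hB
  have hprod : -(sin ((x + y) / 2) * sin ((x - y) / 2)) ≤ (x + y) / 2 * -((x - y) / 2) :=
    calc -(sin ((x + y) / 2) * sin ((x - y) / 2))
        ≤ |sin ((x + y) / 2)| * |sin ((x - y) / 2)| := by rw [← abs_mul]; exact neg_le_abs _
      _ ≤ (x + y) / 2 * -((x - y) / 2) := mul_le_mul hA hB (abs_nonneg _) (by linarith)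
  rw [cos_sub_cos]
  nlinarith

lemma sq_le_four_mul_one_sub_cos {c : ℝ} (hc : 0 ≤ c) (hc' : c ≤ 2) :
    c ^ 2 ≤ 4 * (1 - cos c) := by
  have hcos : cos c = 1 - 2 * sin (c / 2) ^ 2 := by
    have := cos_two_mul' (c / 2)
    rw [mul_div_cancel₀ c two_ne_zero] at this
    linarith [sin_sq_add_cos_sq (c / 2)]
  have hcube : (c / 2) ^ 3 ≤ c / 2 := by
    have : (c / 2) ^ 2 ≤ 1 := by nlinarith
    nlinarith [mul_le_mul_of_nonneg_left this (by linarith : 0 ≤ c / 2)]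
  have hlin : 5 / 6 * (c / 2) ≤ sin (c / 2) := by
    linarith [sin_ge_sub_cube (x := c / 2) (by linarith)]
  nlinarith [mul_self_le_mul_self (by positivity) hlin]

lemma sq_add_mul_cos_le_sq_add_mul_cos {k x y : ℝ} (hk : 0 ≤ k) (hk' : k ≤ 2) (hx : 0 ≤ x)
    (hxy : x ≤ y) : x ^ 2 + k * cos x ≤ y ^ 2 + k * cos y := by
  have := two_mul_cos_sub_cos_le hx hxy
  rcases le_total (cos x) (cos y) with h | h
  · nlinarith
  · nlinarith

lemma cos_add_cos_le_two_mul_cos_half {a b L : ℝ} (hL : 0 ≤ L) (hLab : L ≤ a + b)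
    (hab : a + b ≤ π) : cos a + cos b ≤ 2 * cos (L / 2) := by
  have h1 : 0 ≤ cos ((a + b) / 2) := cos_nonneg_of_mem_Icc ⟨by linarith, by linarith⟩
  have h2 : cos ((a + b) / 2) ≤ cos (L / 2) :=
    cos_le_cos_of_nonneg_of_le_pi (by linarith) (by linarith) (by linarith)
  rw [cos_add_cos]
  nlinarith [cos_le_one ((a - b) / 2)]

lemma sq_div_eight_mul_cos_le {a b L δ : ℝ} (ha : a ∈ Icc 0 π) (hb : b ∈ Icc 0 π)
    (hL : L ∈ Icc 0 4) (hδ : δ ∈ Icc 0 π) (hcosδ : 0 ≤ cos δ)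
    (h : cos δ * cos (L / 2) = (cos a + cos b) / 2) :
    L ^ 2 / 8 * cos δ ≤ (a ^ 2 + b ^ 2) / 2 - δ ^ 2 := by
  set μ := arccos ((cos a + cos b) / 2)
  have hμ : μ ∈ Icc 0 π := ⟨arccos_nonneg _, arccos_le_pi _⟩
  have hcosμ : cos μ = cos δ * cos (L / 2) := by
    rw [h]
    exact cos_arccos (by linarith [neg_one_le_cos a, neg_one_le_cos b])
      (by linarith [cos_le_one a, cos_le_one b])
  have hδμ : δ ≤ μ :=
    (strictAntiOn_cos.le_iff_ge hμ hδ).1 (hcosμ ▸ mul_le_of_le_one_right hcosδ (cos_le_one _))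
  calc L ^ 2 / 8 * cos δ = cos δ * (L / 2) ^ 2 / 2 := by ring
    _ ≤ cos δ * (4 * (1 - cos (L / 2))) / 2 := by
        gcongr; exact sq_le_four_mul_one_sub_cos (by linarith [hL.1]) (by linarith [hL.2])
    _ = 2 * (cos δ - cos μ) := by rw [hcosμ]; ring
    _ ≤ μ ^ 2 - δ ^ 2 := two_mul_cos_sub_cos_le hδ.1 hδμ
    _ ≤ (a ^ 2 + b ^ 2) / 2 - δ ^ 2 := by linarith [arccos_cos_add_cos_div_two_sq_le ha hb]

section Sphere

variable {x y : EuclideanSpace ℝ (Fin 3)}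

lemma inner_euclidean_fin_three (x₁ x₂ x₃ y₁ y₂ y₃ : ℝ) :
    ⟪!₂[x₁, x₂, x₃], !₂[y₁, y₂, y₃]⟫ = x₁ * y₁ + x₂ * y₂ + x₃ * y₃ := by
  simp only [PiLp.inner_apply, RCLike.inner_apply, ringHom_apply, Fin.sum_univ_three,
    Matrix.cons_val_zero, Matrix.cons_val_one, Matrix.cons_val]
  ring

lemma norm_euclidean_fin_three_eq_one {x₁ x₂ x₃ : ℝ} (h : x₁ ^ 2 + x₂ ^ 2 + x₃ ^ 2 = 1) :
    ‖!₂[x₁, x₂, x₃]‖ = 1 := by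
  rw [norm_eq_sqrt_real_inner, inner_euclidean_fin_three, ← sqrt_one, ← h]
  ring_nf

lemma sphereDist_eq_of_inner_eq_cos {θ : ℝ} (h : ⟪x, y⟫ = cos θ) (h₀ : 0 ≤ θ) (hπ : θ ≤ π) :
    sphereDist x y = θ := by
  rw [sphereDist, h, arccos_cos h₀ hπ]

lemma cos_sphereDist (hx : ‖x‖ = 1) (hy : ‖y‖ = 1) : cos (sphereDist x y) = ⟪x, y⟫ := by
  have := abs_real_inner_le_norm x y
  rw [hx, hy, one_mul] at this
  exact cos_arccos (abs_le.1 this).1 (abs_le.1 this).2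

lemma sphereInterp_zero (x y : EuclideanSpace ℝ (Fin 3)) : sphereInterp x y 0 = x := by
  unfold sphereInterp
  split_ifs with h
  · rfl
  · simp [div_self h]

lemma inner_sphereInterp_half (h₀ : 0 < sphereDist x y) (hπ : sphereDist x y < π)
    (z : EuclideanSpace ℝ (Fin 3)) :
    ⟪sphereInterp x y (1 / 2), z⟫ = (⟪x, z⟫ + ⟪y, z⟫) / (2 * cos (sphereDist x y / 2)) := by
  set L := sphereDist x y
  have hsin : sin L = 2 * sin (L / 2) * cos (L / 2) := by
    rw [← sin_two_mul, mul_div_cancel₀ L two_ne_zero]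
  have hsin_half : 0 < sin (L / 2) := sin_pos_of_pos_of_lt_pi (by linarith) (by linarith)
  have hcos_half : 0 < cos (L / 2) := cos_pos_of_mem_Ioo ⟨by linarith, by linarith⟩
  rw [sphereInterp, if_neg (by rw [hsin]; positivity), inner_add_left, real_inner_smul_left,
    real_inner_smul_left, show (1 - 1 / 2) * L = L / 2 by ring, show 1 / 2 * L = L / 2 by ring,
    hsin]
  field_simp

lemma exists_sphere_triangle {a b c : ℝ} (hc : 0 < c) (habc : a ≤ b + c) (hbca : b ≤ c + a)
    (hcab : c ≤ a + b) (hperim : a + b + c < 2 * π) :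
    ∃ p q r : EuclideanSpace ℝ (Fin 3), ‖p‖ = 1 ∧ ‖q‖ = 1 ∧ ‖r‖ = 1 ∧
      sphereDist p q = c ∧ sphereDist q r = a ∧ sphereDist r p = b := by
  have ha : a ∈ Icc 0 π := ⟨by linarith, by linarith⟩
  have hb : b ∈ Icc 0 π := ⟨by linarith, by linarith⟩
  have hsinc : 0 < sin c := sin_pos_of_pos_of_lt_pi hc (by linarith)
  have hupper : cos a ≤ cos (b - c) := by
    rw [← cos_abs (b - c)]
    exact cos_le_cos_of_nonneg_of_le_pi (abs_nonneg _) ha.2 (abs_le.2 ⟨by linarith, by linarith⟩)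
  have hlower : cos (b + c) ≤ cos a := by
    by_cases hbc : b + c ≤ π
    · exact cos_le_cos_of_nonneg_of_le_pi ha.1 hbc habc
    · rw [← cos_two_pi_sub]
      exact cos_le_cos_of_nonneg_of_le_pi ha.1 (by linarith) (by linarith)
  rw [cos_sub] at hupper
  rw [cos_add] at hlower
  -- third vertex `(cos b, y, z)`: `⟪q, r⟫ = cos a` forces `y`, and the triangle inequalities
  -- (through `cos (b + c) ≤ cos a ≤ cos (b - c)`) give `|y| ≤ sin b`, so that `z` is real
  set y := (cos a - cos b * cos c) / sin c
  have hy : |y| ≤ sin b := by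
    rw [abs_div, abs_of_pos hsinc, div_le_iff₀ hsinc]
    exact abs_le.2 ⟨by linarith, by linarith⟩
  have hy_sq : y ^ 2 ≤ sin b ^ 2 := by
    rw [← sq_abs y]; exact pow_le_pow_left₀ (abs_nonneg y) hy 2
  refine ⟨!₂[1, 0, 0], !₂[cos c, sin c, 0], !₂[cos b, y, √(sin b ^ 2 - y ^ 2)],
    norm_euclidean_fin_three_eq_one (by ring),
    norm_euclidean_fin_three_eq_one (by rw [← sin_sq_add_cos_sq c]; ring),
    norm_euclidean_fin_three_eq_one ?_, sphereDist_eq_of_inner_eq_cos ?_ hc.le (by linarith),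
    sphereDist_eq_of_inner_eq_cos ?_ ha.1 ha.2, sphereDist_eq_of_inner_eq_cos ?_ hb.1 hb.2⟩
  · rw [sq_sqrt (by linarith), ← sin_sq_add_cos_sq b]; ring
  · rw [inner_euclidean_fin_three]; ring
  · rw [inner_euclidean_fin_three]; simp only [y]; field_simp; ring
  · rw [inner_euclidean_fin_three]; ring

end Sphere

namespace CAT1Space

variable {Y : Type*} [MetricSpace Y] [CompleteSpace Y] (H : CAT1Space Y)

lemma interp_self (Q : Y) {t : ℝ} (ht : t ∈ Icc 0 1) : H.interp Q Q t = Q := by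
  have hQQ : dist Q Q < π := by rw [dist_self]; exact pi_pos
  have := H.interp_dist Q Q hQQ t 0 ht ⟨le_rfl, zero_le_one⟩
  rwa [H.interp_zero Q Q hQQ, dist_self, mul_zero, dist_eq_zero] at this

lemma dist_interp_half_le_arccos {P Q R : Y} (hQR : 0 < dist Q R)
    (hperim : dist Q R + dist R P + dist P Q < 2 * π) :
    dist (H.interp Q R (1 / 2)) P ≤
      arccos ((cos (dist R P) + cos (dist Q P)) / (2 * cos (dist Q R / 2))) := by
  have hRQP := dist_triangle R Q P
  have hPRQ := dist_triangle P R Q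
  have hQPR := dist_triangle Q P R
  have hPR : dist P R = dist R P := dist_comm P R
  have hQP : dist Q P = dist P Q := dist_comm Q P
  have hRQ : dist R Q = dist Q R := dist_comm R Q
  obtain ⟨q, r, p, hq, hr, hp, hqr, hrp, hpq⟩ := exists_sphere_triangle
    (a := dist R P) (b := dist P Q) (c := dist Q R) hQR (by linarith) (by linarith) (by linarith)
    (by linarith)
  have hcomp := H.comparison Q R P hperim q r p hq hr hp hqr hrp hpq 0 (1 / 2)
    ⟨le_rfl, zero_le_one⟩ ⟨by norm_num, by norm_num⟩
  rw [H.interp_zero P R (by linarith), sphereInterp_zero] at hcomp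
  refine hcomp.trans_eq ?_
  rw [sphereDist, inner_sphereInterp_half (hqr ▸ hQR) (by linarith), real_inner_comm p q,
    ← cos_sphereDist hp hq, ← cos_sphereDist hr hp, hqr, hrp, hpq, hQP, add_comm]

end CAT1Space

/-- Convexity bound in a CAT(1) space: with `M` the midpoint of `Q` and `R`,
`(1/8)·cos(d(M,P))·d(Q,R)² ≤ ½(d(R,P)² + d(Q,P)²) − d(M,P)²`. -/
theorem statement5 (Y : Type*) [MetricSpace Y] [CompleteSpace Y]
    (H : CAT1Space Y) (P Q R : Y)
    (hPQ : dist P Q < Real.pi / 2) (hPR : dist P R < Real.pi / 2) :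
    (1 / 8) * Real.cos (dist (H.interp Q R (1 / 2)) P) * dist Q R ^ 2 ≤
      (1 / 2) * (dist R P ^ 2 + dist Q P ^ 2) -
        dist (H.interp Q R (1 / 2)) P ^ 2 := by
  rcases (dist_nonneg (x := Q) (y := R)).eq_or_lt with hQR | hQR
  · obtain rfl := dist_eq_zero.1 hQR.symm
    rw [H.interp_self Q ⟨by norm_num, by norm_num⟩, dist_self]
    linarith
  rw [dist_comm] at hPQ hPR
  have hL : dist Q R ≤ dist R P + dist Q P := by linarith [dist_triangle Q P R, dist_comm P R]
  have hx := H.dist_interp_half_le_arccos hQR (by linarith [dist_comm P Q])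
  set a := dist R P
  set b := dist Q P
  set L := dist Q R
  set v := (cos a + cos b) / (2 * cos (L / 2))
  have ha : 0 ≤ a := dist_nonneg
  have hb : 0 ≤ b := dist_nonneg
  have hcos_half : 0 < cos (L / 2) := cos_pos_of_mem_Ioo ⟨by linarith, by linarith⟩
  have hv_nonneg : 0 ≤ v := div_nonneg (add_nonneg (cos_nonneg_of_mem_Icc ⟨by linarith, hPR.le⟩)
    (cos_nonneg_of_mem_Icc ⟨by linarith, hPQ.le⟩)) (by positivity)
  have hv_le_one : v ≤ 1 :=
    (div_le_one (by positivity)).2 (cos_add_cos_le_two_mul_cos_half hQR.le hL (by linarith))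
  have hcos_arccos : cos (arccos v) = v := cos_arccos (by linarith) hv_le_one
  have hspherical := sq_div_eight_mul_cos_le (a := a) (b := b) (L := L) ⟨ha, by linarith⟩
    ⟨hb, by linarith⟩ ⟨hQR.le, by linarith [pi_le_four]⟩ ⟨arccos_nonneg v, arccos_le_pi v⟩
    (hv_nonneg.trans hcos_arccos.ge) (by rw [hcos_arccos]; simp only [v]; field_simp)
  have hmono := sq_add_mul_cos_le_sq_add_mul_cos (k := L ^ 2 / 8) (by positivity)
    (by nlinarith [pi_le_four]) dist_nonneg hx
  linarith
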